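/- arXiv:1305.0177 — 2 statements merged into one kernel-verified Lean document; each statement's English description precedes it below -/
import Mathlib

section
/- There is a constant k_0 ∈ ℕ such that for every k ≥ k_0, every c ∈ [0,4], and d = 2k·ln k − ln k − c, the following holds w.h.p. for G = G(n,⌈dn/2⌉): there is no k-coloring σ of G such that the number of colors i ∈ {1,...,k} with | |σ^{-1}(i)| − n/k | > n/(k·(ln k)^4) exceeds (ln k)^8. -/
open Filter

/-- Uniform counting probability on a finite sample space `Ω`. -/
noncomputable def prob {Ω : Type*} (p : Ω → Prop) : ℝ :=
  (Nat.card {x : Ω // p x} : ℝ) / (Nat.card Ω : ℝ)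

/-- The sample space of the random graph `G(n,m)`. -/
def GraphSpace (n m : ℕ) : Type :=
  {E : Finset (Sym2 (Fin n)) // E.card = m ∧ ∀ e ∈ E, ¬ e.IsDiag}

/-- `σ` is a proper `k`-coloring of the graph with edge set `E`. -/
def IsColoring {n k : ℕ} (E : Finset (Sym2 (Fin n))) (σ : Fin n → Fin k) : Prop :=
  ∀ u v : Fin n, s(u, v) ∈ E → σ u ≠ σ v

/-!
First moment method. A colouring `σ` is proper exactly when all edges of `G` lie in the complete
multipartite graph on its colour classes, which has `(n² - ∑ᵢ |σ⁻¹ i|²) / 2` edges. If more than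
`(ln k)⁸` classes deviate from `n / k` by more than `n / (k (ln k)⁴)`, then
`∑ᵢ |σ⁻¹ i|² ≥ n² / k + n² / k²`, so for `n > k³` at most a fraction `q = (1 - 1/k)(1 - 1/k²)` of
all pairs is bichromatic and `σ` is proper for `G(n, m)` with probability at most `q ^ m`.
A union bound over the `kⁿ` colourings leaves `(k q^(d/2))ⁿ`, and `ln q ≤ -1/k - 1/k²` gives
`ln k + (d/2) ln q ≤ (c (k + 1) - (k - 1) ln k) / (2k²) < 0` as soon as `ln k ≥ 6`.
-/

open Finset SimpleGraph

namespace Nat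

theorem sub_mul_le_sub_mul_of_le {F N : ℕ} (m : ℕ) (h : F ≤ N) : (F - m) * N ≤ (N - m) * F := by
  rw [Nat.sub_mul, Nat.sub_mul, mul_comm F N]
  exact Nat.sub_le_sub_left (Nat.mul_le_mul_left m h) _

theorem descFactorial_mul_pow_le_descFactorial_mul_pow {F N : ℕ} (h : F ≤ N) (m : ℕ) :
    F.descFactorial m * N ^ m ≤ N.descFactorial m * F ^ m := by
  induction m with
  | zero => simp
  | succ m ih =>
    rw [descFactorial_succ, descFactorial_succ, pow_succ, pow_succ]
    calc (F - m) * F.descFactorial m * (N ^ m * N)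
        = ((F - m) * N) * (F.descFactorial m * N ^ m) := by ring
      _ ≤ ((N - m) * F) * (N.descFactorial m * F ^ m) :=
          Nat.mul_le_mul (sub_mul_le_sub_mul_of_le m h) ih
      _ = (N - m) * N.descFactorial m * (F ^ m * F) := by ring

theorem choose_mul_pow_le_choose_mul_pow {F N : ℕ} (h : F ≤ N) (m : ℕ) :
    F.choose m * N ^ m ≤ N.choose m * F ^ m := by
  have := descFactorial_mul_pow_le_descFactorial_mul_pow h m
  rw [descFactorial_eq_factorial_mul_choose, descFactorial_eq_factorial_mul_choose,
    mul_assoc, mul_assoc] at this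
  exact Nat.le_of_mul_le_mul_left this m.factorial_pos

theorem cast_choose_div_cast_choose_le {F N : ℕ} (h : F ≤ N) (m : ℕ) :
    (F.choose m / N.choose m : ℝ) ≤ ((F : ℝ) / N) ^ m := by
  rcases Nat.eq_zero_or_pos (N.choose m) with hm | hm
  · rw [hm, Nat.cast_zero, div_zero]
    positivity
  rcases Nat.eq_zero_or_pos N with rfl | hN
  · cases m <;> simp_all
  rw [div_pow, div_le_div_iff₀ (by exact_mod_cast hm) (by positivity),
    mul_comm _ (N.choose m : ℝ)]
  exact_mod_cast choose_mul_pow_le_choose_mul_pow h m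

end Nat

section Prob

variable {Ω : Type*} [Fintype Ω]

theorem prob_le_one (p : Ω → Prop) : prob p ≤ 1 :=
  div_le_one_of_le₀ (by exact_mod_cast Finite.card_subtype_le p) (Nat.cast_nonneg _)

theorem prob_not [Nonempty Ω] (p : Ω → Prop) : prob (fun x => ¬ p x) = 1 - prob p := by
  classical
  have hΩ : (0 : ℝ) < Nat.card Ω := by exact_mod_cast Nat.card_pos
  rw [prob, prob, Nat.card_eq_fintype_card, Fintype.card_subtype_compl,
    Nat.cast_sub (Fintype.card_subtype_le p), sub_div, ← Nat.card_eq_fintype_card,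
    ← Nat.card_eq_fintype_card, div_self hΩ.ne']

theorem prob_exists_le_sum {ι : Type*} [Fintype ι] (P : ι → Ω → Prop) :
    prob (fun x => ∃ i, P i x) ≤ ∑ i, prob (P i) := by
  classical
  simp only [prob, ← Finset.sum_div, Nat.card_eq_fintype_card, Fintype.card_subtype]
  gcongr
  calc (#{x | ∃ i, P i x} : ℝ) ≤ #(univ.biUnion fun i => ({x | P i x} : Finset Ω)) := by
        gcongr
        intro x
        simp
    _ ≤ ∑ i, (#{x | P i x} : ℝ) := mod_cast card_biUnion_le

end Prob

section Variance

variable {ι : Type*} [Fintype ι]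

theorem card_lt_abs_mul_sq_le_sum_sq (f : ι → ℝ) {δ : ℝ} (hδ : 0 ≤ δ) :
    #{i | δ < |f i|} * δ ^ 2 ≤ ∑ i, f i ^ 2 :=
  calc (#{i | δ < |f i|} : ℝ) * δ ^ 2 = ∑ i ∈ {i | δ < |f i|}, δ ^ 2 := by
        rw [sum_const, nsmul_eq_mul]
    _ ≤ ∑ i ∈ {i | δ < |f i|}, f i ^ 2 := sum_le_sum fun i hi => by
        rw [← sq_abs (f i)]
        exact pow_le_pow_left₀ hδ (mem_filter.1 hi).2.le 2
    _ ≤ ∑ i, f i ^ 2 := sum_le_sum_of_subset_of_nonneg (subset_univ _) fun _ _ _ => sq_nonneg _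

theorem sum_sq_eq_sq_sum_div_card_add_sum_sub_sq [Nonempty ι] (a : ι → ℝ) :
    ∑ i, a i ^ 2 =
      (∑ i, a i) ^ 2 / Fintype.card ι + ∑ i, (a i - (∑ j, a j) / Fintype.card ι) ^ 2 := by
  have hι : (Fintype.card ι : ℝ) ≠ 0 := by positivity
  simp only [sub_sq, sum_add_distrib, sum_sub_distrib, ← sum_mul, ← mul_sum, sum_const,
    card_univ, nsmul_eq_mul]
  field_simp
  ring

theorem sq_sum_div_card_add_mul_sq_le_sum_sq [Nonempty ι] (a : ι → ℝ) {M δ : ℝ} (hδ : 0 ≤ δ)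
    (hM : M ≤ #{i | δ < |a i - (∑ j, a j) / Fintype.card ι|}) :
    (∑ i, a i) ^ 2 / Fintype.card ι + M * δ ^ 2 ≤ ∑ i, a i ^ 2 := by
  rw [sum_sq_eq_sq_sum_div_card_add_sum_sub_sq a]
  gcongr
  exact (mul_le_mul_of_nonneg_right hM (sq_nonneg δ)).trans (card_lt_abs_mul_sq_le_sum_sq _ hδ)

end Variance

namespace GraphSpace

variable {n m : ℕ}

noncomputable instance : Fintype (GraphSpace n m) := by
  unfold GraphSpace
  classical
  infer_instance

theorem card_subtype_subset_edgeFinset (H : SimpleGraph (Fin n)) [DecidableRel H.Adj] :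
    Nat.card {G : GraphSpace n m // G.1 ⊆ H.edgeFinset} = (#H.edgeFinset).choose m := by
  let e : {G : GraphSpace n m // G.1 ⊆ H.edgeFinset} ≃ H.edgeFinset.powersetCard m :=
    { toFun G := ⟨G.1.1, mem_powersetCard.2 ⟨G.2, G.1.2.1⟩⟩
      invFun E := ⟨⟨E.1, (mem_powersetCard.1 E.2).2, fun e he =>
          H.not_isDiag_of_mem_edgeSet (mem_edgeFinset.1 ((mem_powersetCard.1 E.2).1 he))⟩,
        (mem_powersetCard.1 E.2).1⟩
      left_inv _ := rfl
      right_inv _ := rfl }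
  rw [Nat.card_congr e, Nat.card_eq_finsetCard, card_powersetCard]

theorem card_eq : Nat.card (GraphSpace n m) = (n.choose 2).choose m := by
  classical
  have hsub (G : GraphSpace n m) : G.1 ⊆ (⊤ : SimpleGraph (Fin n)).edgeFinset := fun e he => by
    simpa [Sym2.mem_diagSet] using G.2.2 e he
  rw [← Nat.card_congr (Equiv.subtypeUnivEquiv hsub), card_subtype_subset_edgeFinset,
    card_edgeFinset_top_eq_card_choose_two, Fintype.card_fin]

theorem nonempty_of_le (h : m ≤ n.choose 2) : Nonempty (GraphSpace n m) := by
  refine (Nat.card_pos_iff.1 ?_).1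
  rw [card_eq]
  exact Nat.choose_pos h

end GraphSpace

theorem isColoring_iff_subset {n k : ℕ} (E : Finset (Sym2 (Fin n))) (σ : Fin n → Fin k) :
    IsColoring E σ ↔ E ⊆ ((⊤ : SimpleGraph (Fin k)).comap σ).edgeFinset := by
  refine ⟨fun h e he => ?_, fun h u v huv => by simpa using h huv⟩
  induction e with
  | _ u v => simpa using h u v he

theorem prob_isColoring_le {n k : ℕ} (m : ℕ) (σ : Fin n → Fin k) :
    prob (fun G : GraphSpace n m => IsColoring G.1 σ) ≤
      ((#((⊤ : SimpleGraph (Fin k)).comap σ).edgeFinset : ℝ) / n.choose 2) ^ m := by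
  simp only [prob, isColoring_iff_subset, GraphSpace.card_subtype_subset_edgeFinset,
    GraphSpace.card_eq]
  refine Nat.cast_choose_div_cast_choose_le ?_ m
  simpa using card_edgeFinset_le_card_choose_two (G := (⊤ : SimpleGraph (Fin k)).comap σ)

theorem two_mul_card_edgeFinset_comap_top_add_sum_sq {V α : Type*} [Fintype V] [DecidableEq V]
    [Fintype α] [DecidableEq α] (σ : V → α) :
    2 * #((⊤ : SimpleGraph α).comap σ).edgeFinset + ∑ i, #{v | σ v = i} ^ 2 =
      Fintype.card V ^ 2 := by
  have hdeg (v : V) :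
      ((⊤ : SimpleGraph α).comap σ).degree v + #{u | σ u = σ v} = Fintype.card V := by
    rw [← card_neighborFinset_eq_degree, neighborFinset_eq_filter, ← card_univ,
      ← card_filter_add_card_filter_not (s := univ) (p := fun u => σ v ≠ σ u)]
    simp only [comap_adj, top_adj, not_not, eq_comm]
  have hsq : ∑ v, #{u | σ u = σ v} = ∑ i, #{v | σ v = i} ^ 2 := by
    rw [← sum_fiberwise univ σ]
    refine sum_congr rfl fun i _ => ?_
    rw [sum_congr rfl fun v hv => by rw [(mem_filter.1 hv).2], sum_const, smul_eq_mul, sq]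
  rw [← sum_degrees_eq_twice_card_edges, ← hsq, ← sum_add_distrib, sum_congr rfl fun v _ => hdeg v,
    sum_const, card_univ, smul_eq_mul, sq]

def IsUnbalanced {n k : ℕ} (σ : Fin n → Fin k) : Prop :=
  Real.log k ^ (8 : ℕ) <
    (Nat.card {i : Fin k // n / (k * Real.log k ^ (4 : ℕ)) <
      |(Nat.card {v : Fin n // σ v = i} : ℝ) - n / k|} : ℝ)

namespace IsUnbalanced

variable {n k : ℕ} {σ : Fin n → Fin k}

theorem sq_div_add_sq_div_sq_le (hk : 2 ≤ k) (hσ : IsUnbalanced σ) :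
    (n : ℝ) ^ 2 / k + (n : ℝ) ^ 2 / k ^ 2 ≤ ∑ i, (#{v | σ v = i} : ℝ) ^ 2 := by
  have : NeZero k := ⟨by omega⟩
  have hlog : Real.log k ≠ 0 := (Real.log_pos (by exact_mod_cast hk)).ne'
  have hsum : ∑ i, (#{v | σ v = i} : ℝ) = n := by
    exact_mod_cast (card_eq_sum_card_fiberwise fun v _ => mem_univ (σ v)).symm.trans
      (card_univ.trans (Fintype.card_fin n))
  have key := sq_sum_div_card_add_mul_sq_le_sum_sq (fun i => (#{v | σ v = i} : ℝ))
    (M := Real.log k ^ 8) (δ := n / (k * Real.log k ^ 4)) (by positivity) (by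
      simp only [IsUnbalanced, Nat.card_eq_fintype_card, Fintype.card_subtype] at hσ
      simpa only [hsum, Fintype.card_fin] using hσ.le)
  rwa [hsum, Fintype.card_fin, div_pow, mul_pow, ← pow_mul, mul_div_assoc', mul_comm,
    mul_div_mul_right _ _ (pow_ne_zero _ hlog)] at key

theorem card_edgeFinset_div_le (hk : 2 ≤ k) (hn : k ^ 3 + 1 ≤ n) (hσ : IsUnbalanced σ) :
    (#((⊤ : SimpleGraph (Fin k)).comap σ).edgeFinset : ℝ) / n.choose 2 ≤
      (1 - 1 / k) * (1 - 1 / k ^ 2) := by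
  have hn' : (k : ℝ) ^ 3 ≤ n - 1 := by
    rw [le_sub_iff_add_le]
    exact_mod_cast hn
  have hedges : (2 * #((⊤ : SimpleGraph (Fin k)).comap σ).edgeFinset : ℝ) =
      n ^ 2 - ∑ i, (#{v | σ v = i} : ℝ) ^ 2 := by
    rw [eq_sub_iff_add_eq]
    exact_mod_cast (two_mul_card_edgeFinset_comap_top_add_sum_sq σ).trans (by simp)
  have hsq := hσ.sq_div_add_sq_div_sq_le hk
  have hnk : (n : ℝ) ≤ n * (n - 1) / k ^ 3 := by
    rw [le_div_iff₀ (by positivity)]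
    have : (0 : ℝ) ≤ n := n.cast_nonneg
    nlinarith
  have hcoef : 1 - 1 / (k : ℝ) - 1 / k ^ 2 ≤ 1 := by
    have : (0 : ℝ) ≤ 1 / k + 1 / k ^ 2 := by positivity
    linarith
  have hpos : (0 : ℝ) < n * (n - 1) := by
    have : (0 : ℝ) < k ^ 3 := by positivity
    exact mul_pos (by linarith) (by linarith)
  rw [Nat.cast_choose_two, div_div_eq_mul_div, div_le_iff₀ hpos]
  calc (#((⊤ : SimpleGraph (Fin k)).comap σ).edgeFinset : ℝ) * 2
      = n ^ 2 - ∑ i, (#{v | σ v = i} : ℝ) ^ 2 := by rw [mul_comm, hedges]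
    _ ≤ n ^ 2 - (n ^ 2 / k + n ^ 2 / k ^ 2) := by gcongr
    _ = n * (n - 1) * (1 - 1 / k - 1 / k ^ 2) + n * (1 - 1 / k - 1 / k ^ 2) := by ring
    _ ≤ n * (n - 1) * (1 - 1 / k - 1 / k ^ 2) + n * (n - 1) / k ^ 3 := by
        gcongr
        exact (mul_le_of_le_one_right n.cast_nonneg hcoef).trans hnk
    _ = (1 - 1 / k) * (1 - 1 / k ^ 2) * (n * (n - 1)) := by field_simp; ring

end IsUnbalanced

theorem one_sub_one_div_mem_Ioc {K : ℝ} (hK : 1 < K) : 1 - 1 / K ∈ Set.Ioc 0 1 := by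
  rw [one_div]
  exact ⟨sub_pos.2 (inv_lt_one_of_one_lt₀ hK), sub_le_self _ (inv_nonneg.2 (by linarith))⟩

theorem one_sub_one_div_mul_one_sub_one_div_sq_mem_Ioc {K : ℝ} (hK : 1 < K) :
    (1 - 1 / K) * (1 - 1 / K ^ 2) ∈ Set.Ioc 0 1 :=
  have h1 := one_sub_one_div_mem_Ioc hK
  have h2 := one_sub_one_div_mem_Ioc (one_lt_pow₀ hK two_ne_zero)
  ⟨mul_pos h1.1 h2.1, mul_le_one₀ h1.2 h2.1.le h2.2⟩

theorem ceil_mul_div_two_le_choose_two {d : ℝ} {n : ℕ} (hn : 2 * ⌈d⌉₊ + 1 ≤ n) :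
    ⌈d * n / 2⌉₊ ≤ n.choose 2 := by
  have hd : d * n / 2 ≤ (⌈d⌉₊ * n : ℕ) := by
    push_cast
    have := Nat.le_ceil d
    have : (0 : ℝ) ≤ ⌈d⌉₊ * n := by positivity
    nlinarith [n.cast_nonneg (α := ℝ)]
  refine (Nat.ceil_le.2 hd).trans ?_
  rw [Nat.choose_two_right, Nat.le_div_iff_mul_le two_pos]
  calc ⌈d⌉₊ * n * 2 = n * (2 * ⌈d⌉₊) := by ring
    _ ≤ n * (n - 1) := Nat.mul_le_mul_left n (by omega)

theorem pow_mul_pow_ceil_le {K q : ℝ} (d : ℝ) (hK : 0 ≤ K) (hq0 : 0 < q) (hq1 : q ≤ 1) (n : ℕ) :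
    K ^ n * q ^ ⌈d * n / 2⌉₊ ≤ (K * q ^ (d / 2)) ^ n := by
  rw [mul_pow, ← Real.rpow_natCast q, ← Real.rpow_natCast (q ^ (d / 2)), ← Real.rpow_mul hq0.le]
  refine mul_le_mul_of_nonneg_left (Real.rpow_le_rpow_of_exponent_ge hq0 hq1 ?_) (by positivity)
  linarith [Nat.le_ceil (d * n / 2)]

theorem mul_rpow_half_lt_one {K c : ℝ} (hK : Real.exp 6 ≤ K) (hc : c ≤ 4) :
    K * ((1 - 1 / K) * (1 - 1 / K ^ 2)) ^ ((2 * K * Real.log K - Real.log K - c) / 2) < 1 := by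
  have hK7 : 7 ≤ K := by linarith [Real.add_one_le_exp 6]
  have hlog : 6 ≤ Real.log K := by rwa [Real.le_log_iff_exp_le (by linarith)]
  have h1 := (one_sub_one_div_mem_Ioc (by linarith : 1 < K)).1
  have h2 := (one_sub_one_div_mem_Ioc (by nlinarith : 1 < K ^ 2)).1
  rw [← Real.log_neg_iff (by positivity), Real.log_mul (by positivity) (by positivity),
    Real.log_rpow (by positivity), Real.log_mul h1.ne' h2.ne']
  have hlog1 := Real.log_le_sub_one_of_pos h1
  have hlog2 := Real.log_le_sub_one_of_pos h2
  have hd : 0 ≤ (2 * K * Real.log K - Real.log K - c) / 2 := by nlinarith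
  calc Real.log K + (2 * K * Real.log K - Real.log K - c) / 2 *
        (Real.log (1 - 1 / K) + Real.log (1 - 1 / K ^ 2))
      ≤ Real.log K + (2 * K * Real.log K - Real.log K - c) / 2 * (-(1 / K) - 1 / K ^ 2) := by
        gcongr; linarith
    _ = (c * (K + 1) - Real.log K * (K - 1)) / (2 * K ^ 2) := by field_simp; ring
    _ < 0 := div_neg_of_neg_of_pos (by nlinarith) (by positivity)

theorem prob_isColoring_and_isUnbalanced_le {n k : ℕ} (m : ℕ) (σ : Fin n → Fin k) (hk : 2 ≤ k)
    (hn : k ^ 3 + 1 ≤ n) :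
    prob (fun G : GraphSpace n m => IsColoring G.1 σ ∧ IsUnbalanced σ) ≤
      ((1 - 1 / k) * (1 - 1 / k ^ 2)) ^ m := by
  by_cases hσ : IsUnbalanced σ
  · simp only [hσ, and_true]
    exact (prob_isColoring_le m σ).trans
      (pow_le_pow_left₀ (by positivity) (hσ.card_edgeFinset_div_le hk hn) m)
  · simp only [hσ, and_false, prob, Nat.card_of_isEmpty, Nat.cast_zero, zero_div]
    have hk' : (1 : ℝ) < k := by exact_mod_cast hk
    exact pow_nonneg (one_sub_one_div_mul_one_sub_one_div_sq_mem_Ioc hk').1.le m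

theorem statement5 :
    ∃ k₀ : ℕ, ∀ k : ℕ, k₀ ≤ k → ∀ c : ℝ, 0 ≤ c → c ≤ 4 →
      ∀ d : ℝ, d = 2 * k * Real.log k - Real.log k - c →
      Tendsto (fun n : ℕ =>
          prob (fun G : GraphSpace n ⌈d * n / 2⌉₊ =>
            ¬ ∃ σ : Fin n → Fin k, IsColoring G.1 σ ∧
              Real.log k ^ (8 : ℕ) <
                (Nat.card {i : Fin k //
                    n / (k * Real.log k ^ (4 : ℕ)) <
                      |(Nat.card {v : Fin n // σ v = i} : ℝ) - n / k|} : ℝ)))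
        atTop (nhds 1) := by
  refine ⟨⌈Real.exp 6⌉₊, fun k hk c _ hc d hd => ?_⟩
  have hk' : Real.exp 6 ≤ k := Nat.ceil_le.1 hk
  have hk2 : 2 ≤ k := by
    have := Real.add_one_le_exp 6
    exact_mod_cast (by linarith : (2 : ℝ) ≤ k)
  set q : ℝ := (1 - 1 / k) * (1 - 1 / k ^ 2)
  obtain ⟨hq0, hq1⟩ : q ∈ Set.Ioc 0 1 :=
    one_sub_one_div_mul_one_sub_one_div_sq_mem_Ioc (by exact_mod_cast hk2)
  have hr : k * q ^ (d / 2) < 1 := hd ▸ mul_rpow_half_lt_one hk' hc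
  refine tendsto_of_tendsto_of_tendsto_of_le_of_le'
    (by simpa using (tendsto_pow_atTop_nhds_zero_of_lt_one (by positivity) hr).const_sub 1)
    tendsto_const_nhds ?_ (Eventually.of_forall fun n => prob_le_one _)
  filter_upwards [eventually_ge_atTop (k ^ 3 + 1), eventually_ge_atTop (2 * ⌈d⌉₊ + 1)]
    with n hn hnd
  have := GraphSpace.nonempty_of_le (ceil_mul_div_two_le_choose_two hnd)
  calc 1 - (k * q ^ (d / 2)) ^ n ≤ 1 - ∑ _σ : Fin n → Fin k, q ^ ⌈d * n / 2⌉₊ := by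
        rw [sum_const, card_univ, Fintype.card_fun, Fintype.card_fin, Fintype.card_fin,
          nsmul_eq_mul, Nat.cast_pow]
        exact sub_le_sub_left (pow_mul_pow_ceil_le d k.cast_nonneg hq0 hq1 n) 1
    _ ≤ 1 - ∑ σ : Fin n → Fin k,
          prob (fun G : GraphSpace n ⌈d * n / 2⌉₊ => IsColoring G.1 σ ∧ IsUnbalanced σ) :=
        sub_le_sub_left (sum_le_sum fun σ _ => prob_isColoring_and_isUnbalanced_le _ σ hk2 hn) 1
    _ ≤ 1 - prob (fun G : GraphSpace n ⌈d * n / 2⌉₊ =>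
          ∃ σ : Fin n → Fin k, IsColoring G.1 σ ∧ IsUnbalanced σ) :=
        sub_le_sub_left (prob_exists_le_sum _) 1
    _ = _ := (prob_not _).symm
end

section
/- Fix d > 0 and set m = ⌈dn/2⌉. Then for all sufficiently large n and every set A of multigraphs on V = {1,...,n}: P[G(n,m) ∈ A] ≤ e^{d + 2d²} · P[G'(n,m) ∈ A], where the simple graph G(n,m) is regarded as a multigraph. -/
/-- The sample space of the random multigraph `G'(n,m)`. -/
abbrev MultiSpace (n m : ℕ) := Fin m → Fin n × Fin n

/-- The multigraph (multiset of undirected edges) given by the tuple `e`. -/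
def toMultigraph {n m : ℕ} (e : MultiSpace n m) : Multiset (Sym2 (Fin n)) :=
  Finset.univ.val.map (fun i => Sym2.mk (e i).1 (e i).2)

/-!
Ordering the `m` edges of a simple graph in all `m!` ways and orienting each of them in both
directions gives `m! 2^m` distinct tuples, all inducing that graph, so
`P[G(n,m) ∈ A] ≤ n^{2m} / (m! 2^m C(N,m)) · P[G'(n,m) ∈ A]` with `N = C(n,2)`.
Since `m! C(N,m) ≥ (N - m)^m`, the factor is at most `(1 - x)^{-m}` with `x = (n + 2m)/n²`,
and `(1 - x)⁻¹ ≤ e^{2x}` for `x ≤ 1/2`; finally `2xm → d + d² < d + 2d²`.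
-/

open Real Filter Nat

section Orientation

variable {α : Type*} [LinearOrder α]

def orientedPair (s : Sym2 α) (b : Bool) : α × α :=
  bif b then (s.inf, s.sup) else (s.sup, s.inf)

lemma mk_orientedPair (s : Sym2 α) (b : Bool) :
    Sym2.mk (orientedPair s b).1 (orientedPair s b).2 = s := by
  have h : s(s.inf, s.sup) = s := Sym2.sortEquiv.symm_apply_apply s
  cases b
  · simpa [orientedPair, Sym2.eq_swap] using h
  · exact h

lemma orientedPair_injective {s : Sym2 α} (hs : ¬ s.IsDiag) :
    Function.Injective (orientedPair s) := by
  have hne : s.inf ≠ s.sup := by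
    induction s with | _ a b
    simp_all
  intro b₁ b₂ h
  cases b₁ <;> cases b₂ <;> simp_all [orientedPair, Prod.ext_iff, eq_comm]

end Orientation

section Counting

variable {n m : ℕ}

lemma prob_nonneg {Ω : Type*} (p : Ω → Prop) : 0 ≤ prob p := by
  unfold prob; positivity

noncomputable def edgeAt (G : GraphSpace n m) (j : Fin m) : Sym2 (Fin n) :=
  ((Finset.equivFinOfCardEq G.2.1).symm j : Sym2 (Fin n))

lemma edgeAt_mem (G : GraphSpace n m) (j : Fin m) : edgeAt G j ∈ G.1 :=
  ((Finset.equivFinOfCardEq G.2.1).symm j).2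

lemma edgeAt_injective (G : GraphSpace n m) : Function.Injective (edgeAt G) :=
  fun _ _ h => (Finset.equivFinOfCardEq G.2.1).symm.injective (Subtype.ext h)

noncomputable def edgeTuple (G : GraphSpace n m) (σ : Equiv.Perm (Fin m)) (b : Fin m → Bool) :
    MultiSpace n m :=
  fun i => orientedPair (edgeAt G (σ i)) (b i)

lemma toMultigraph_edgeTuple (G : GraphSpace n m) (σ : Equiv.Perm (Fin m)) (b : Fin m → Bool) :
    toMultigraph (edgeTuple G σ b) = G.1.val := by
  calc toMultigraph (edgeTuple G σ b)
      = ((Finset.univ.val.map σ).map (Finset.equivFinOfCardEq G.2.1).symm).map Subtype.val := by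
        simp only [toMultigraph, edgeTuple, mk_orientedPair, Multiset.map_map]; rfl
    _ = G.1.val := by
        rw [Multiset.map_univ_val_equiv, Multiset.map_univ_val_equiv, Finset.univ_eq_attach]
        exact Multiset.attach_map_val _

lemma edgeTuple_injective (G : GraphSpace n m) :
    Function.Injective fun p : Equiv.Perm (Fin m) × (Fin m → Bool) => edgeTuple G p.1 p.2 := by
  rintro ⟨σ₁, b₁⟩ ⟨σ₂, b₂⟩ h
  have hσ : σ₁ = σ₂ := Equiv.ext fun i => edgeAt_injective G <| by
    simpa only [edgeTuple, mk_orientedPair] using congrArg (fun p => Sym2.mk p.1 p.2) (congrFun h i)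
  subst hσ
  have hb : b₁ = b₂ := funext fun i =>
    orientedPair_injective (G.2.2 _ (edgeAt_mem _ _)) (congrFun h i)
  rw [hb]

lemma card_mul_le_card (A : Set (Multiset (Sym2 (Fin n)))) :
    Nat.card {G : GraphSpace n m // (G.1.val : Multiset (Sym2 (Fin n))) ∈ A} * (m ! * 2 ^ m)
      ≤ Nat.card {e : MultiSpace n m // toMultigraph e ∈ A} := by
  let F : {G : GraphSpace n m // (G.1.val : Multiset (Sym2 (Fin n))) ∈ A} ×
      (Equiv.Perm (Fin m) × (Fin m → Bool)) → {e : MultiSpace n m // toMultigraph e ∈ A} :=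
    fun x => ⟨edgeTuple x.1.1 x.2.1 x.2.2, by rw [toMultigraph_edgeTuple]; exact x.1.2⟩
  have hF : Function.Injective F := by
    rintro ⟨G₁, p₁⟩ ⟨G₂, p₂⟩ h
    have h' : edgeTuple G₁.1 p₁.1 p₁.2 = edgeTuple G₂.1 p₂.1 p₂.2 := congrArg Subtype.val h
    have hG : G₁ = G₂ := Subtype.ext <| Subtype.ext <| Finset.val_injective <| by
      rw [← toMultigraph_edgeTuple G₁.1 p₁.1 p₁.2, h', toMultigraph_edgeTuple]
    subst hG
    rw [edgeTuple_injective G₁.1 h']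
  simpa [Nat.card_prod, Nat.card_fun, Fintype.card_perm] using Nat.card_le_card_of_injective F hF

lemma card_graphSpace (n m : ℕ) : Nat.card (GraphSpace n m) = (n.choose 2).choose m := by
  let e : GraphSpace n m ≃ {s : Finset (Sym2 (Fin n)) //
      s ∈ (Finset.univ.filter fun s : Sym2 (Fin n) => ¬ s.IsDiag).powersetCard m} :=
    Equiv.subtypeEquivRight fun s => by
      simp [Finset.mem_powersetCard, Finset.subset_iff, and_comm]
  rw [Nat.card_congr e, Nat.card_eq_finsetCard, Finset.card_powersetCard,
    ← Fintype.card_subtype, Sym2.card_subtype_not_diag, Fintype.card_fin]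

lemma card_multiSpace (n m : ℕ) : Nat.card (MultiSpace n m) = (n * n) ^ m := by
  simp

lemma prob_graphSpace_le (A : Set (Multiset (Sym2 (Fin n)))) (hn : 0 < n) :
    prob (fun G : GraphSpace n m => (G.1.val : Multiset (Sym2 (Fin n))) ∈ A)
      ≤ ((n : ℝ) * n) ^ m / (m ! * 2 ^ m * (n.choose 2).choose m) *
        prob (fun e : MultiSpace n m => toMultigraph e ∈ A) := by
  have hcount : (Nat.card {G : GraphSpace n m // (G.1.val : Multiset (Sym2 (Fin n))) ∈ A} : ℝ)
      * (m ! * 2 ^ m) ≤ Nat.card {e : MultiSpace n m // toMultigraph e ∈ A} := by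
    exact_mod_cast card_mul_le_card A
  have hM : (0 : ℝ) < ((n : ℝ) * n) ^ m := by positivity
  unfold prob
  rw [card_graphSpace, card_multiSpace]
  push_cast
  generalize (Nat.card {G : GraphSpace n m // (G.1.val : Multiset (Sym2 (Fin n))) ∈ A} : ℝ) = K
    at hcount ⊢
  generalize (Nat.card {e : MultiSpace n m // toMultigraph e ∈ A} : ℝ) = L at hcount ⊢
  rcases eq_or_ne ((n.choose 2).choose m : ℝ) 0 with hC | hC
  · simp [hC]
  calc K / (n.choose 2).choose m ≤ L / (m ! * 2 ^ m * (n.choose 2).choose m) := by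
        rw [div_le_div_iff₀ (by positivity) (by positivity)]
        linarith [mul_le_mul_of_nonneg_right hcount (Nat.cast_nonneg ((n.choose 2).choose m))]
    _ = _ := by field_simp

end Counting

section Estimates

lemma sub_pow_le_factorial_mul_choose {N m : ℕ} (h : m ≤ N) :
    ((N : ℝ) - m) ^ m ≤ m ! * N.choose m := by
  have key : (N - m) ^ m ≤ m ! * N.choose m := by
    rw [← Nat.descFactorial_eq_factorial_mul_choose]
    exact (Nat.pow_le_pow_left (by omega) m).trans (Nat.pow_sub_le_descFactorial N m)
  rw [← Nat.cast_sub h]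
  exact_mod_cast key

lemma inv_one_sub_le_exp_two_mul {x : ℝ} (hx0 : 0 ≤ x) (hx : x ≤ 1 / 2) :
    (1 - x)⁻¹ ≤ exp (2 * x) := by
  rw [inv_le_iff_one_le_mul₀ (by linarith)]
  nlinarith [add_one_le_exp (2 * x)]

lemma pow_div_factorial_mul_choose_le_exp {n m : ℕ} (hn : 0 < n)
    (h : 2 * ((n : ℝ) + 2 * m) ≤ n * n) :
    ((n : ℝ) * n) ^ m / (m ! * 2 ^ m * (n.choose 2).choose m)
      ≤ exp (2 * (n + 2 * m) * m / (n * n)) := by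
  set x := ((n : ℝ) + 2 * m) / (n * n) with hx
  have hnn : (0 : ℝ) < n * n := by positivity
  have hx0 : 0 ≤ x := by positivity
  have hx2 : x ≤ 1 / 2 := by rw [div_le_iff₀ hnn]; linarith
  have h1x : 0 < 1 - x := by linarith
  have hsplit : (n : ℝ) * n * (1 - x) = 2 * ((n.choose 2 : ℝ) - m) := by
    rw [Nat.cast_choose_two, hx]; field_simp; ring
  have hmN : m ≤ n.choose 2 := by
    have : (m : ℝ) ≤ n.choose 2 := by linarith [mul_pos hnn h1x]
    exact_mod_cast this
  have hden : ((n : ℝ) * n * (1 - x)) ^ m ≤ m ! * 2 ^ m * (n.choose 2).choose m := by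
    rw [hsplit, mul_pow, mul_comm ((m ! : ℝ)), mul_assoc]
    exact mul_le_mul_of_nonneg_left (sub_pow_le_factorial_mul_choose hmN) (by positivity)
  calc ((n : ℝ) * n) ^ m / (m ! * 2 ^ m * (n.choose 2).choose m)
      ≤ ((n : ℝ) * n) ^ m / ((n : ℝ) * n * (1 - x)) ^ m :=
        div_le_div_of_nonneg_left (by positivity) (by positivity) hden
    _ = (1 - x)⁻¹ ^ m := by
        rw [mul_pow ((n : ℝ) * n), div_mul_cancel_left₀ (by positivity), inv_pow]
    _ ≤ exp (2 * x) ^ m :=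
        pow_le_pow_left₀ (inv_pos.2 h1x).le (inv_one_sub_le_exp_two_mul hx0 hx2) m
    _ = exp (2 * (n + 2 * m) * m / (n * n)) := by rw [← exp_nat_mul, hx]; ring_nf

lemma two_mul_add_two_mul_le {d n m : ℝ} (hd : 0 ≤ d) (hm : 2 * m ≤ d * n + 2)
    (hn : 2 * d + 6 ≤ n) : 2 * (n + 2 * m) ≤ n * n := by
  nlinarith

lemma two_mul_add_two_mul_mul_le {d n m : ℝ} (hm0 : 0 ≤ m)
    (hm : 2 * m ≤ d * n + 2) (hn₁ : 1 ≤ n) (hn₂ : 4 * d + 6 ≤ d ^ 2 * n) :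
    2 * (n + 2 * m) * m ≤ (d + 2 * d ^ 2) * (n * n) := by
  nlinarith

end Estimates

theorem statement8 (d : ℝ) (hd : 0 < d) :
    ∃ n₀ : ℕ, ∀ n : ℕ, n₀ ≤ n →
      ∀ A : Set (Multiset (Sym2 (Fin n))),
        prob (fun G : GraphSpace n ⌈d * n / 2⌉₊ => (G.1.val : Multiset (Sym2 (Fin n))) ∈ A)
          ≤ Real.exp (d + 2 * d ^ 2) *
            prob (fun e : MultiSpace n ⌈d * n / 2⌉₊ => toMultigraph e ∈ A) := by
  obtain ⟨n₀, hlarge⟩ := eventually_atTop.1 <|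
    (tendsto_natCast_atTop_atTop.eventually_ge_atTop (2 * d + 6)).and
      (tendsto_natCast_atTop_atTop.eventually_ge_atTop ((4 * d + 6) / d ^ 2))
  refine ⟨n₀, fun n hn₀ A => ?_⟩
  obtain ⟨hn₁, hn₂⟩ := hlarge n hn₀
  rw [div_le_iff₀' (by positivity)] at hn₂
  have hn : 0 < n := by exact_mod_cast (show (0 : ℝ) < n by linarith)
  have hm : 2 * (⌈d * n / 2⌉₊ : ℝ) ≤ d * n + 2 := by
    linarith [Nat.ceil_lt_add_one (show 0 ≤ d * n / 2 by positivity)]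
  refine (prob_graphSpace_le A hn).trans (mul_le_mul_of_nonneg_right ?_ (prob_nonneg _))
  refine (pow_div_factorial_mul_choose_le_exp hn (two_mul_add_two_mul_le hd.le hm hn₁)).trans ?_
  refine exp_le_exp.2 ((div_le_iff₀ (by positivity)).2 ?_)
  exact two_mul_add_two_mul_mul_le (by positivity) hm (by linarith) hn₂
end
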